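/- arXiv:0806.1597 — 5 statements merged into one kernel-verified Lean document; each statement's English description precedes it below -/
import Mathlib

section
/- Let v : [t₀,t₁) → ℝ solve the Riccati-type ODE v' = A₂(t)v² + A₁(t)v + A₀(t) with v(t₀) = v₀, where A₂, A₁, A₀ are continuous and bounded on [t₀,t₁) and A₂ ≥ 0. Define K₁(t) = ∫_{t₀}^t A₁, K₀(t) = ∫_{t₀}^t |A₀| e^{-K₁}, K₂(t) = ∫_{t₀}^t A₂ e^{K₁}. If v₀ > K₀(t₁) (where K₀(t₁), K₂(t₁) denote the limits as t → t₁), then K₂(t₁) < (v₀ - K₀(t₁))⁻¹. -/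
/-!
Multiplying by the integrating factor `exp (-K₁)` turns `v` into `w = exp (-K₁) v`, a bounded
solution of `w' = g₂ w² + a₀` with `g₂ = A₂ exp K₁` and `|a₀| = |A₀| exp (-K₁)`. The shift
`z = w + K₀ - K₀(t₁)` is increasing, hence positive, and at most `w`, so `z' ≥ g₂ z²`, i.e.
`z⁻¹ + K₂` is decreasing: `K₂(t) ≤ z(t₀)⁻¹ - z(t)⁻¹`. Since `v` and `A₁` are bounded, `z` is
bounded above, which keeps the inequality strict in the limit `t → t₁`.
-/

open MeasureTheory Set Filter Topology Real

section Ico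

variable {f : ℝ → ℝ} {a b : ℝ}

theorem ContinuousOn.hasDerivAt_integral_Ico (hf : ContinuousOn f (Ico a b)) {x : ℝ}
    (hx : x ∈ Ioo a b) : HasDerivAt (fun t => ∫ y in a..t, f y) (f x) x :=
  intervalIntegral.integral_hasDerivAt_right
    ((hf.mono (Icc_subset_Ico_right hx.2)).intervalIntegrable_of_Icc hx.1.le)
    ((hf.mono Ioo_subset_Ico_self).stronglyMeasurableAtFilter isOpen_Ioo x hx)
    (hf.continuousAt (Ico_mem_nhds hx.1 hx.2))

theorem ContinuousOn.continuousOn_integral_Ico (hf : ContinuousOn f (Ico a b)) :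
    ContinuousOn (fun t => ∫ y in a..t, f y) (Ico a b) := by
  intro x hx
  obtain ⟨s, hxs, hsb⟩ := exists_between hx.2
  have hIcc : ContinuousOn (fun t => ∫ y in a..t, f y) (Icc a s) := by
    have has : uIcc a s = Icc a s := uIcc_of_le (hx.1.trans hxs.le)
    rw [← has]
    exact intervalIntegral.continuousOn_primitive_interval
      (has ▸ (hf.mono (Icc_subset_Ico_right hsb)).integrableOn_Icc)
  refine (hIcc x ⟨hx.1, hxs.le⟩).mono_of_mem_nhdsWithin ?_
  filter_upwards [self_mem_nhdsWithin, nhdsWithin_le_nhds (Iio_mem_nhds hxs)] with t ht hts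
  exact ⟨ht.1, le_of_lt hts⟩

theorem abs_integral_le_of_abs_le_Ico {B x : ℝ} (hf : ∀ t ∈ Ico a b, |f t| ≤ B)
    (hx : x ∈ Ico a b) : |∫ t in a..x, f t| ≤ B * (b - a) := by
  have hB : 0 ≤ B := (abs_nonneg _).trans (hf a ⟨le_rfl, hx.1.trans_lt hx.2⟩)
  calc |∫ t in a..x, f t| ≤ B * |x - a| := by
        refine intervalIntegral.norm_integral_le_of_norm_le_const (f := f) (C := B)
          fun t ht => hf t ?_
        rw [uIoc_of_le hx.1] at ht
        exact ⟨ht.1.le, ht.2.trans_lt hx.2⟩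
    _ ≤ B * (b - a) := by
        rw [abs_of_nonneg (sub_nonneg.2 hx.1)]
        exact mul_le_mul_of_nonneg_left (by linarith [hx.2]) hB

theorem MonotoneOn.le_of_tendsto_nhdsLT {L x : ℝ} (hf : MonotoneOn f (Ico a b))
    (hL : Tendsto f (𝓝[<] b) (𝓝 L)) (hx : x ∈ Ico a b) : f x ≤ L :=
  ge_of_tendsto hL <| by
    filter_upwards [Ioo_mem_nhdsLT hx.2] with y hy
    exact hf hx ⟨hx.1.trans hy.1.le, hy.2⟩ hy.1.le

end Ico

theorem ContinuousOn.integral_le_of_tendsto_nhdsLT {g : ℝ → ℝ} {a b c x : ℝ}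
    (hgc : ContinuousOn g (Ico a b)) (hg : ∀ t ∈ Ioo a b, 0 ≤ g t)
    (hc : Tendsto (fun t => ∫ y in a..t, g y) (𝓝[<] b) (𝓝 c)) (hx : x ∈ Ico a b) :
    (∫ y in a..x, g y) ≤ c := by
  refine MonotoneOn.le_of_tendsto_nhdsLT (f := fun t => ∫ y in a..t, g y) ?_ hc hx
  refine monotoneOn_of_hasDerivWithinAt_nonneg (convex_Ico a b) hgc.continuousOn_integral_Ico
    (fun t ht => ?_) (by simpa only [interior_Ico] using hg)
  rw [interior_Ico] at ht ⊢
  exact (hgc.hasDerivAt_integral_Ico ht).hasDerivWithinAt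

theorem antitoneOn_inv_add_of_mul_sq_le_deriv {D : Set ℝ} (hD : Convex ℝ D)
    {z z' g G : ℝ → ℝ} (hzc : ContinuousOn z D) (hGc : ContinuousOn G D)
    (hz : ∀ x ∈ interior D, HasDerivAt z (z' x) x) (hG : ∀ x ∈ interior D, HasDerivAt G (g x) x)
    (hpos : ∀ x ∈ D, 0 < z x) (hle : ∀ x ∈ interior D, g x * z x ^ 2 ≤ z' x) :
    AntitoneOn (fun x => (z x)⁻¹ + G x) D := by
  refine antitoneOn_of_hasDerivWithinAt_nonpos hD
    ((hzc.inv₀ fun x hx => (hpos x hx).ne').add hGc)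
    (fun x hx => (((hz x hx).inv (hpos x (interior_subset hx)).ne').add (hG x hx)).hasDerivWithinAt)
    fun x hx => ?_
  have hzx : 0 < z x ^ 2 := pow_pos (hpos x (interior_subset hx)) 2
  rw [neg_div, neg_add_le_iff_le_add, add_zero, le_div_iff₀ hzx]
  exact hle x hx

theorem integral_lt_inv_of_riccati_supersolution {a b c L M : ℝ} (hab : a < b)
    {w w' g₂ g₀ : ℝ → ℝ} (hwc : ContinuousOn w (Ico a b))
    (hw : ∀ t ∈ Ioo a b, HasDerivAt w (w' t) t)
    (hg₂c : ContinuousOn g₂ (Ico a b)) (hg₀c : ContinuousOn g₀ (Ico a b))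
    (hg₂ : ∀ t ∈ Ioo a b, 0 ≤ g₂ t) (hg₀ : ∀ t ∈ Ioo a b, 0 ≤ g₀ t)
    (hw' : ∀ t ∈ Ioo a b, g₂ t * w t ^ 2 - g₀ t ≤ w' t) (hM : ∀ t ∈ Ico a b, w t ≤ M)
    (hG₀ : Tendsto (fun t => ∫ x in a..t, g₀ x) (𝓝[<] b) (𝓝 c))
    (hG₂ : Tendsto (fun t => ∫ x in a..t, g₂ x) (𝓝[<] b) (𝓝 L)) (hc : c < w a) :
    L < (w a - c)⁻¹ := by
  set G₂ := fun t => ∫ x in a..t, g₂ x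
  set z := fun t => w t + (∫ x in a..t, g₀ x) - c
  have ha : a ∈ Ico a b := ⟨le_rfl, hab⟩
  have hza : z a = w a - c := by simp [z]
  have hzw : ∀ t ∈ Ico a b, z t ≤ w t := fun t ht => by
    linarith [hg₀c.integral_le_of_tendsto_nhdsLT hg₀ hG₀ ht]
  have hzc : ContinuousOn z (Ico a b) :=
    (hwc.add hg₀c.continuousOn_integral_Ico).sub continuousOn_const
  have hz : ∀ t ∈ Ioo a b, HasDerivAt z (w' t + g₀ t) t := fun t ht =>
    ((hw t ht).add (hg₀c.hasDerivAt_integral_Ico ht)).sub_const c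
  have hz' : ∀ t ∈ Ioo a b, g₂ t * w t ^ 2 ≤ w' t + g₀ t := fun t ht => by linarith [hw' t ht]
  have hzpos : ∀ t ∈ Ico a b, 0 < z t := by
    have hmono : MonotoneOn z (Ico a b) :=
      monotoneOn_of_hasDerivWithinAt_nonneg (convex_Ico a b) hzc
        (by simpa only [interior_Ico] using fun t ht => (hz t ht).hasDerivWithinAt)
        (by simpa only [interior_Ico] using fun t ht =>
          (mul_nonneg (hg₂ t ht) (sq_nonneg (w t))).trans (hz' t ht))
    exact fun t ht => (sub_pos.2 hc).trans_le (hza ▸ hmono ha ht ht.1)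
  have hanti : AntitoneOn (fun t => (z t)⁻¹ + G₂ t) (Ico a b) := by
    refine antitoneOn_inv_add_of_mul_sq_le_deriv (convex_Ico a b) hzc
      hg₂c.continuousOn_integral_Ico (by simpa only [interior_Ico] using hz)
      (by simpa only [interior_Ico] using fun t ht => hg₂c.hasDerivAt_integral_Ico ht) hzpos ?_
    rw [interior_Ico]
    refine fun t ht => le_trans ?_ (hz' t ht)
    have hzt := hzpos t (Ioo_subset_Ico_self ht)
    exact mul_le_mul_of_nonneg_left (pow_le_pow_left₀ hzt.le (hzw t (Ioo_subset_Ico_self ht)) 2)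
      (hg₂ t ht)
  have hbound : ∀ t ∈ Ico a b, G₂ t ≤ (w a - c)⁻¹ - M⁻¹ := fun t ht => by
    have h := hanti ha ht ht.1
    have hMz : M⁻¹ ≤ (z t)⁻¹ := inv_anti₀ (hzpos t ht) ((hzw t ht).trans (hM t ht))
    simp only [G₂, intervalIntegral.integral_same, hza, add_zero] at h
    linarith
  have hMpos : 0 < M := (hzpos a ha).trans_le ((hzw a ha).trans (hM a ha))
  calc L ≤ (w a - c)⁻¹ - M⁻¹ :=
        le_of_tendsto hG₂ (eventually_of_mem (Ico_mem_nhdsLT hab) hbound)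
    _ < (w a - c)⁻¹ := sub_lt_self _ (inv_pos.2 hMpos)

theorem HasDerivAt.exp_neg_mul {K v : ℝ → ℝ} {k v' t : ℝ} (hK : HasDerivAt K k t)
    (hv : HasDerivAt v v' t) :
    HasDerivAt (fun s => Real.exp (-K s) * v s) (Real.exp (-K t) * (v' - k * v t)) t :=
  (hK.fun_neg.exp.fun_mul hv).congr_deriv (by ring)

theorem riccati_integrating_factor_ineq (a₂ a₁ a₀ k v : ℝ) :
    a₂ * exp k * (exp (-k) * v) ^ 2 - |a₀| * exp (-k) ≤
      exp (-k) * (a₂ * v ^ 2 + a₁ * v + a₀ - a₁ * v) := by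
  have hexp : exp k * exp (-k) = 1 := by rw [← exp_add, add_neg_cancel, exp_zero]
  have ha₀ : -|a₀| * exp (-k) ≤ a₀ * exp (-k) :=
    mul_le_mul_of_nonneg_right (neg_abs_le a₀) (exp_pos _).le
  linear_combination ha₀ + a₂ * v ^ 2 * exp (-k) * hexp

/-- Riccati blowup lemma, first conclusion: if the solution `v` of
`v' = A₂ v² + A₁ v + A₀` exists (and is bounded) on `[t₀, t₁)` with
`v t₀ > K₀(t₁)`, then `K₂(t₁) < (v t₀ - K₀(t₁))⁻¹`. -/
theorem stmt_0
    (t₀ t₁ : ℝ) (ht : t₀ < t₁)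
    (A₂ A₁ A₀ v : ℝ → ℝ)
    (hA₂c : ContinuousOn A₂ (Set.Ico t₀ t₁))
    (hA₁c : ContinuousOn A₁ (Set.Ico t₀ t₁))
    (hA₀c : ContinuousOn A₀ (Set.Ico t₀ t₁))
    (B : ℝ) (hB : ∀ t ∈ Set.Ico t₀ t₁, |A₂ t| ≤ B ∧ |A₁ t| ≤ B ∧ |A₀ t| ≤ B)
    (hA₂pos : ∀ t ∈ Set.Ico t₀ t₁, 0 ≤ A₂ t)
    (hv : ∀ t ∈ Set.Ico t₀ t₁, HasDerivAt v (A₂ t * v t ^ 2 + A₁ t * v t + A₀ t) t)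
    (Mv : ℝ) (hvb : ∀ t ∈ Set.Ico t₀ t₁, |v t| ≤ Mv)
    (K₀lim K₂lim : ℝ)
    (hK₀ : Filter.Tendsto
      (fun t => ∫ x in t₀..t, |A₀ x| * Real.exp (-(∫ y in t₀..x, A₁ y)))
      (nhdsWithin t₁ (Set.Iio t₁)) (nhds K₀lim))
    (hK₂ : Filter.Tendsto
      (fun t => ∫ x in t₀..t, A₂ x * Real.exp (∫ y in t₀..x, A₁ y))
      (nhdsWithin t₁ (Set.Iio t₁)) (nhds K₂lim))
    (hv₀ : v t₀ > K₀lim) :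
    K₂lim < (v t₀ - K₀lim)⁻¹ := by
  set K₁ := fun t => ∫ y in t₀..t, A₁ y
  have hK₁c : ContinuousOn K₁ (Ico t₀ t₁) := hA₁c.continuousOn_integral_Ico
  have hw_le : ∀ t ∈ Ico t₀ t₁, exp (-K₁ t) * v t ≤ exp (B * (t₁ - t₀)) * Mv := fun t ht' =>
    calc exp (-K₁ t) * v t ≤ exp (-K₁ t) * Mv :=
          mul_le_mul_of_nonneg_left ((le_abs_self _).trans (hvb t ht')) (exp_pos _).le
      _ ≤ exp (B * (t₁ - t₀)) * Mv :=
          mul_le_mul_of_nonneg_right (exp_le_exp.2 ((neg_le_abs _).trans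
              (abs_integral_le_of_abs_le_Ico (fun s hs => (hB s hs).2.1) ht')))
            ((abs_nonneg _).trans (hvb t ht'))
  have h := integral_lt_inv_of_riccati_supersolution ht (w := fun t => exp (-K₁ t) * v t)
    ((continuous_exp.comp_continuousOn hK₁c.neg).mul
      fun t ht' => (hv t ht').continuousAt.continuousWithinAt)
    (fun t ht' => HasDerivAt.exp_neg_mul (hA₁c.hasDerivAt_integral_Ico ht')
      (hv t (Ioo_subset_Ico_self ht')))
    (hA₂c.mul (continuous_exp.comp_continuousOn hK₁c))
    (hA₀c.abs.mul (continuous_exp.comp_continuousOn hK₁c.neg))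
    (fun t ht' => mul_nonneg (hA₂pos t (Ioo_subset_Ico_self ht')) (exp_pos _).le)
    (fun t _ => mul_nonneg (abs_nonneg _) (exp_pos _).le)
    (fun t _ => riccati_integrating_factor_ineq _ _ _ _ _)
    hw_le hK₀ hK₂ (by simpa [K₁] using hv₀)
  simpa [K₁] using h
end

section
/- Under the hypotheses of the Riccati blowup lemma (v' = A₂v² + A₁v + A₀ on [t₀,t₁), A₂ ≥ 0, A₂,A₁,A₀ continuous and bounded, v₀ > K₀(t₁)), the solution satisfies the lower bound e^{-K₁(t)} v(t) ≥ K₀(t₁) - K₀(t) + [(v₀ - K₀(t₁))⁻¹ - K₂(t)]⁻¹ for all t ∈ [t₀,t₁). -/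
/-!
The integrating factor `w = e^{-K₁} v` removes the linear term: `w' = A₂ e^{K₁} w² + A₀ e^{-K₁}`.
Then `z = w + K₀ - K₀(t₁)` has `z' ≥ A₂ e^{K₁} w² ≥ 0`, so `z ≥ z(t₀) = v₀ - K₀(t₁) > 0`, while
`z ≤ w` because `K₀` increases to `K₀(t₁)`. Hence `z' ≥ A₂ e^{K₁} z²`, i.e. `(z⁻¹ + K₂)' ≤ 0`, which
gives `z(t)⁻¹ ≤ (v₀ - K₀(t₁))⁻¹ - K₂(t)`; inverting is the claimed bound.
-/

open Set Filter Topology MeasureTheory intervalIntegral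

section Primitive

variable {E : Type*} [NormedAddCommGroup E] {f : ℝ → E} {a b : ℝ}

theorem ContinuousOn.intervalIntegrable_of_Ico (hf : ContinuousOn f (Ico a b)) {t : ℝ}
    (ht : t ∈ Ico a b) : IntervalIntegrable f volume a t :=
  (hf.mono (Icc_subset_Ico_right ht.2)).intervalIntegrable_of_Icc ht.1

variable [NormedSpace ℝ E]

theorem ContinuousOn.continuousOn_primitive_Ico (hf : ContinuousOn f (Ico a b)) :
    ContinuousOn (fun t => ∫ x in a..t, f x) (Ico a b) := by
  intro x hx
  obtain ⟨r, hxr, hrb⟩ := exists_between hx.2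
  have hr : r ∈ Ico a b := ⟨hx.1.trans hxr.le, hrb⟩
  have hIcc : ContinuousWithinAt (fun t => ∫ x in a..t, f x) (Icc a r) x :=
    continuousWithinAt_primitive Real.volume_singleton
      (by simpa [hr.1] using hf.intervalIntegrable_of_Ico hr)
  exact hIcc.mono_of_mem_nhdsWithin <|
    mem_nhdsWithin.2 ⟨Iio r, isOpen_Iio, hxr, fun y hy => ⟨hy.2.1, hy.1.le⟩⟩

theorem ContinuousOn.hasDerivAt_primitive_of_mem_Ioo [CompleteSpace E]
    (hf : ContinuousOn f (Ico a b)) {x : ℝ} (hx : x ∈ Ioo a b) :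
    HasDerivAt (fun t => ∫ y in a..t, f y) (f x) x :=
  integral_hasDerivAt_right (hf.intervalIntegrable_of_Ico (Ioo_subset_Ico_self hx))
    ((hf.mono Ioo_subset_Ico_self).stronglyMeasurableAtFilter isOpen_Ioo x hx)
    (hf.continuousAt (Ico_mem_nhds hx.1 hx.2))

end Primitive

theorem integral_le_of_tendsto_nhdsLT {k : ℝ → ℝ} {a b L : ℝ} (hk : ContinuousOn k (Ico a b))
    (hk₀ : ∀ t ∈ Ico a b, 0 ≤ k t)
    (hL : Tendsto (fun t => ∫ x in a..t, k x) (𝓝[<] b) (𝓝 L)) :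
    ∀ t ∈ Ico a b, ∫ x in a..t, k x ≤ L := by
  intro t ht
  refine ge_of_tendsto hL ?_
  filter_upwards [Ioo_mem_nhdsLT ht.2] with s hs
  have hs' : s ∈ Ico a b := ⟨ht.1.trans hs.1.le, hs.2⟩
  refine integral_mono_interval le_rfl ht.1 hs.1.le ?_ (hk.intervalIntegrable_of_Ico hs')
  filter_upwards [ae_restrict_mem measurableSet_Ioc] with x hx
  exact hk₀ x ⟨hx.1.le, hx.2.trans_lt hs'.2⟩

theorem inv_add_integral_le_of_hasDerivAt {z z' g : ℝ → ℝ} {a b : ℝ} (hab : a ≤ b)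
    (hz : ContinuousOn z (Icc a b)) (hz₀ : ∀ x ∈ Icc a b, 0 < z x)
    (hderiv : ∀ x ∈ Ioo a b, HasDerivAt z (z' x) x)
    (hineq : ∀ x ∈ Ioo a b, g x * z x ^ 2 ≤ z' x) (hg : IntegrableOn g (Icc a b)) :
    (z b)⁻¹ + ∫ x in a..b, g x ≤ (z a)⁻¹ := by
  have key := sub_le_integral_of_hasDeriv_right_of_le hab
    (hz.inv₀ fun x hx => (hz₀ x hx).ne')
    (fun x hx => ((hderiv x hx).inv (hz₀ x (Ioo_subset_Icc_self hx)).ne').hasDerivWithinAt)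
    hg.neg (fun x hx => ?_)
  · simp only [Pi.inv_apply, Pi.neg_apply, intervalIntegral.integral_neg] at key
    linarith
  · have hzx := hz₀ x (Ioo_subset_Icc_self hx)
    rw [Pi.neg_apply, neg_div, neg_le_neg_iff, le_div_iff₀ (by positivity)]
    exact hineq x hx

theorem riccati_lower_bound_of_hasDerivAt {w g f k : ℝ → ℝ} {a b L : ℝ}
    (hw : ContinuousOn w (Ico a b))
    (hw' : ∀ t ∈ Ioo a b, HasDerivAt w (g t * w t ^ 2 + f t) t)
    (hg : ContinuousOn g (Ico a b)) (hg₀ : ∀ t ∈ Ioo a b, 0 ≤ g t)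
    (hk : ContinuousOn k (Ico a b)) (hfk : ∀ t ∈ Ioo a b, 0 ≤ f t + k t)
    (hL : ∀ t ∈ Ico a b, ∫ x in a..t, k x ≤ L) (hwa : L < w a) :
    ∀ t ∈ Ico a b, L - (∫ x in a..t, k x) + ((w a - L)⁻¹ - ∫ x in a..t, g x)⁻¹ ≤ w t := by
  intro t ht
  set z : ℝ → ℝ := fun s => w s + (∫ x in a..s, k x) - L with hz
  have hz_cont : ContinuousOn z (Ico a b) :=
    (hw.add hk.continuousOn_primitive_Ico).sub continuousOn_const
  have hz' : ∀ x ∈ Ioo a b, HasDerivAt z (g x * w x ^ 2 + (f x + k x)) x := fun x hx =>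
    (((hw' x hx).add (hk.hasDerivAt_primitive_of_mem_Ioo hx)).sub_const L).congr_deriv (by ring)
  have hz_mono : MonotoneOn z (Ico a b) := by
    refine monotoneOn_of_hasDerivWithinAt_nonneg (convex_Ico a b) hz_cont
      (f' := fun x => g x * w x ^ 2 + (f x + k x))
      (fun x hx => ?_) (fun x hx => ?_) <;> rw [interior_Ico] at hx
    · exact (hz' x hx).hasDerivWithinAt
    · exact add_nonneg (mul_nonneg (hg₀ x hx) (sq_nonneg _)) (hfk x hx)
  have hza : z a = w a - L := by simp [hz]
  have hz_pos : ∀ s ∈ Ico a b, 0 < z s := fun s hs =>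
    (hza ▸ sub_pos.2 hwa).trans_le (hz_mono ⟨le_rfl, hs.1.trans_lt hs.2⟩ hs hs.1)
  have hz_le : ∀ s ∈ Ico a b, z s ≤ w s := fun s hs => by
    simp only [hz]; linarith [hL s hs]
  have hIcc : Icc a t ⊆ Ico a b := Icc_subset_Ico_right ht.2
  have hIoo : Ioo a t ⊆ Ioo a b := Ioo_subset_Ioo_right ht.2.le
  have hcomp := inv_add_integral_le_of_hasDerivAt ht.1 (hz_cont.mono hIcc)
    (fun x hx => hz_pos x (hIcc hx)) (fun x hx => hz' x (hIoo hx))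
    (fun x hx => calc
      g x * z x ^ 2 ≤ g x * w x ^ 2 :=
        mul_le_mul_of_nonneg_left
          (pow_le_pow_left₀ (hz_pos x (hIcc (Ioo_subset_Icc_self hx))).le
            (hz_le x (hIcc (Ioo_subset_Icc_self hx))) 2) (hg₀ x (hIoo hx))
      _ ≤ g x * w x ^ 2 + (f x + k x) := le_add_of_nonneg_right (hfk x (hIoo hx)))
    (hg.mono hIcc).integrableOn_Icc
  have hzt : ((w a - L)⁻¹ - ∫ x in a..t, g x)⁻¹ ≤ z t :=
    inv_le_of_inv_le₀ (hz_pos t ht) (by rw [hza] at hcomp; linarith)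
  simp only [hz] at hzt
  linarith

theorem HasDerivAt.exp_neg_mul_of_riccati {v K : ℝ → ℝ} {a₂ a₁ a₀ t : ℝ}
    (hv : HasDerivAt v (a₂ * v t ^ 2 + a₁ * v t + a₀) t) (hK : HasDerivAt K a₁ t) :
    HasDerivAt (fun s => Real.exp (-K s) * v s)
      (a₂ * Real.exp (K t) * (Real.exp (-K t) * v t) ^ 2 + a₀ * Real.exp (-K t)) t :=
  (hK.neg.exp.mul hv).congr_deriv (by simp only [Pi.neg_apply, Real.exp_neg]; field_simp; ring)

theorem stmt_1_general
    (t₀ t₁ : ℝ)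
    (A₂ A₁ A₀ v : ℝ → ℝ)
    (hA₂c : ContinuousOn A₂ (Set.Ico t₀ t₁))
    (hA₁c : ContinuousOn A₁ (Set.Ico t₀ t₁))
    (hA₀c : ContinuousOn A₀ (Set.Ico t₀ t₁))
    (hA₂pos : ∀ t ∈ Set.Ico t₀ t₁, 0 ≤ A₂ t)
    (hv : ∀ t ∈ Set.Ico t₀ t₁, HasDerivAt v (A₂ t * v t ^ 2 + A₁ t * v t + A₀ t) t)
    (K₀lim : ℝ)
    (hK₀ : Filter.Tendsto
      (fun t => ∫ x in t₀..t, |A₀ x| * Real.exp (-(∫ y in t₀..x, A₁ y)))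
      (nhdsWithin t₁ (Set.Iio t₁)) (nhds K₀lim))
    (hv₀ : v t₀ > K₀lim) :
    ∀ t ∈ Set.Ico t₀ t₁,
      K₀lim - (∫ x in t₀..t, |A₀ x| * Real.exp (-(∫ y in t₀..x, A₁ y)))
        + ((v t₀ - K₀lim)⁻¹ - (∫ x in t₀..t, A₂ x * Real.exp (∫ y in t₀..x, A₁ y)))⁻¹
      ≤ Real.exp (-(∫ y in t₀..t, A₁ y)) * v t := by
  have hK₁ := hA₁c.continuousOn_primitive_Ico
  have hexp : ContinuousOn (fun s => Real.exp (∫ y in t₀..s, A₁ y)) (Ico t₀ t₁) :=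
    Real.continuous_exp.comp_continuousOn hK₁
  have hexp_neg : ContinuousOn (fun s => Real.exp (-∫ y in t₀..s, A₁ y)) (Ico t₀ t₁) :=
    Real.continuous_exp.comp_continuousOn hK₁.neg
  have hk : ContinuousOn (fun s => |A₀ s| * Real.exp (-∫ y in t₀..s, A₁ y)) (Ico t₀ t₁) :=
    hA₀c.abs.mul hexp_neg
  have key := riccati_lower_bound_of_hasDerivAt
    (w := fun s => Real.exp (-∫ y in t₀..s, A₁ y) * v s)
    (f := fun s => A₀ s * Real.exp (-∫ y in t₀..s, A₁ y))
    (hexp_neg.mul fun s hs => (hv s hs).continuousAt.continuousWithinAt)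
    (fun s hs => (hv s (Ioo_subset_Ico_self hs)).exp_neg_mul_of_riccati
      (hA₁c.hasDerivAt_primitive_of_mem_Ioo hs))
    (hA₂c.mul hexp)
    (fun s hs => mul_nonneg (hA₂pos s (Ioo_subset_Ico_self hs)) (Real.exp_pos _).le)
    hk
    (fun s _ => by
      simp only [← add_mul]
      exact mul_nonneg (by linarith [neg_abs_le (A₀ s)]) (Real.exp_pos _).le)
    (integral_le_of_tendsto_nhdsLT hk (fun s _ => by positivity) hK₀)
    (by simpa using hv₀)
  simpa only [integral_same, neg_zero, Real.exp_zero, one_mul] using key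

/-- Riccati blowup lemma, second conclusion: the lower bound
`e^{-K₁(t)} v(t) ≥ K₀(t₁) - K₀(t) + [(v₀ - K₀(t₁))⁻¹ - K₂(t)]⁻¹` on `[t₀, t₁)`. -/
theorem stmt_1
    (t₀ t₁ : ℝ) (ht : t₀ < t₁)
    (A₂ A₁ A₀ v : ℝ → ℝ)
    (hA₂c : ContinuousOn A₂ (Set.Ico t₀ t₁))
    (hA₁c : ContinuousOn A₁ (Set.Ico t₀ t₁))
    (hA₀c : ContinuousOn A₀ (Set.Ico t₀ t₁))
    (B : ℝ) (hB : ∀ t ∈ Set.Ico t₀ t₁, |A₂ t| ≤ B ∧ |A₁ t| ≤ B ∧ |A₀ t| ≤ B)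
    (hA₂pos : ∀ t ∈ Set.Ico t₀ t₁, 0 ≤ A₂ t)
    (hv : ∀ t ∈ Set.Ico t₀ t₁, HasDerivAt v (A₂ t * v t ^ 2 + A₁ t * v t + A₀ t) t)
    (Mv : ℝ) (hvb : ∀ t ∈ Set.Ico t₀ t₁, |v t| ≤ Mv)
    (K₀lim : ℝ)
    (hK₀ : Filter.Tendsto
      (fun t => ∫ x in t₀..t, |A₀ x| * Real.exp (-(∫ y in t₀..x, A₁ y)))
      (nhdsWithin t₁ (Set.Iio t₁)) (nhds K₀lim))
    (hv₀ : v t₀ > K₀lim) :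
    ∀ t ∈ Set.Ico t₀ t₁,
      K₀lim - (∫ x in t₀..t, |A₀ x| * Real.exp (-(∫ y in t₀..x, A₁ y)))
        + ((v t₀ - K₀lim)⁻¹ - (∫ x in t₀..t, A₂ x * Real.exp (∫ y in t₀..x, A₁ y)))⁻¹
      ≤ Real.exp (-(∫ y in t₀..t, A₁ y)) * v t :=
  stmt_1_general t₀ t₁ A₂ A₁ A₀ v hA₂c hA₁c hA₀c hA₂pos hv K₀lim hK₀ hv₀
end

section
/- Let r₀, s₀ : S¹ → ℝ be continuous, let U₀ be the convex hull of the image curve {(r₀(x), s₀(x)) : x ∈ S¹}, and U_δ its open δ-neighborhood. Let (r₋,s₋), (r₊,s₊) be points of the curve where r₀ attains its minimum and maximum respectively, and let γ : [r₋-δ, r₊+δ] → ℝ be the affine function whose graph is the segment from (r₋-δ, s₋) to (r₊+δ, s₊). Then for every (r,s) ∈ U_δ, the line segment from (r,s) to (r,γ(r)) is contained in U_δ. -/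
/-!
The δ-neighbourhood of the convex set `U₀` is convex, so it suffices that the endpoint
`(r, γ r)` lies in it. Every point of `U₀` has first coordinate in `[r₋, r₊]`, hence
`r₋ - δ < r < r₊ + δ`. With `t = (r - r₋ + δ) / (r₊ - r₋ + 2δ) ∈ (0, 1)`, the point
`(1 - t) (r₋, s₋) + t (r₊, s₊)` of the chord, which lies in `U₀`, has height `γ r` and is at
horizontal distance `δ |2t - 1| < δ` from `(r, γ r)`.
-/

open Metric

theorem Convex.setOf_infDist_lt {E : Type*} [NormedAddCommGroup E] [NormedSpace ℝ E] {s : Set E}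
    (hs : Convex ℝ s) (δ : ℝ) : Convex ℝ {x | infDist x s < δ} := by
  rcases s.eq_empty_or_nonempty with rfl | hne
  · by_cases hδ : 0 < δ <;> simp [hδ, convex_univ, convex_empty]
  · convert hs.thickening δ using 1
    ext x
    exact (mem_thickening_iff_infDist_lt hne).symm

theorem dist_vec2_of_snd_eq (x x' y : ℝ) :
    dist (!₂[x, y] : EuclideanSpace ℝ (Fin 2)) !₂[x', y] = |x - x'| := by
  simp [EuclideanSpace.dist_eq, Fin.sum_univ_two, Real.dist_eq, Real.sqrt_sq_eq_abs]

theorem exists_mem_segment_dist_lt {a₁ a₂ b₁ b₂ δ r : ℝ} (hδ : 0 < δ) (hlo : a₁ - δ < r)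
    (hhi : r < b₁ + δ) :
    ∃ Q ∈ segment ℝ (!₂[a₁, a₂] : EuclideanSpace ℝ (Fin 2)) !₂[b₁, b₂],
      dist !₂[r, a₂ + (b₂ - a₂) * (r - a₁ + δ) / (b₁ - a₁ + 2 * δ)] Q < δ := by
  have hd : 0 < b₁ - a₁ + 2 * δ := by linarith
  set t := (r - a₁ + δ) / (b₁ - a₁ + 2 * δ) with ht
  have ht0 : 0 < t := div_pos (by linarith) hd
  have ht1 : t < 1 := (div_lt_one hd).2 (by linarith)
  have hoffset : r - ((1 - t) * a₁ + t * b₁) = δ * (2 * t - 1) := by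
    linear_combination -div_mul_cancel₀ (r - a₁ + δ) hd.ne'
  refine ⟨!₂[(1 - t) * a₁ + t * b₁, (1 - t) * a₂ + t * b₂],
    ⟨1 - t, t, by linarith, ht0.le, by ring, ?_⟩, ?_⟩
  · ext i; fin_cases i <;> simp
  · rw [mul_div_assoc, ← ht, show a₂ + (b₂ - a₂) * t = (1 - t) * a₂ + t * b₂ by ring,
      dist_vec2_of_snd_eq, hoffset, abs_mul, abs_of_pos hδ]
    exact mul_lt_of_lt_one_right hδ (abs_lt.2 ⟨by linarith, by linarith⟩)

theorem convexHull_subset_setOf_apply_mem_Icc {ι : Type*} {s : Set (EuclideanSpace ℝ ι)} {i : ι}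
    {a b : ℝ} (hs : ∀ v ∈ s, v i ∈ Set.Icc a b) :
    convexHull ℝ s ⊆ {v | v i ∈ Set.Icc a b} :=
  convexHull_min hs ((convex_Icc a b).linear_preimage (EuclideanSpace.proj (𝕜 := ℝ) i).toLinearMap)

theorem stmt_4_general (r₀ s₀ : AddCircle (1:ℝ) → ℝ)
    (δ : ℝ) (hδ : 0 < δ)
    (xm xp : AddCircle (1:ℝ))
    (hmin : ∀ x, r₀ xm ≤ r₀ x) (hmax : ∀ x, r₀ x ≤ r₀ xp)
    (U₀ : Set (EuclideanSpace ℝ (Fin 2)))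
    (hU₀ : U₀ = convexHull ℝ
      (Set.range fun x => (!₂[r₀ x, s₀ x] : EuclideanSpace ℝ (Fin 2))))
    (γ : ℝ → ℝ)
    (hγ : ∀ ρ, γ ρ = s₀ xm + (s₀ xp - s₀ xm) * (ρ - r₀ xm + δ) / (r₀ xp - r₀ xm + 2*δ))
    (P : EuclideanSpace ℝ (Fin 2)) (hP : Metric.infDist P U₀ < δ) :
    segment ℝ P (!₂[P 0, γ (P 0)] : EuclideanSpace ℝ (Fin 2))
      ⊆ {Q : EuclideanSpace ℝ (Fin 2) | Metric.infDist Q U₀ < δ} := by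
  have hU₀conv : Convex ℝ U₀ := hU₀ ▸ convex_convexHull ℝ _
  have hcurve (x) : !₂[r₀ x, s₀ x] ∈ U₀ := hU₀ ▸ subset_convexHull ℝ _ ⟨x, rfl⟩
  obtain ⟨Q, hQU₀, hPQ⟩ := (infDist_lt_iff ⟨_, hcurve xm⟩).mp hP
  have hQ : Q 0 ∈ Set.Icc (r₀ xm) (r₀ xp) := by
    rw [hU₀] at hQU₀
    refine convexHull_subset_setOf_apply_mem_Icc ?_ hQU₀
    rintro _ ⟨x, rfl⟩
    exact ⟨hmin x, hmax x⟩
  have hP0 : |P 0 - Q 0| < δ := by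
    rw [← Real.dist_eq]; exact (PiLp.dist_apply_le P Q 0).trans_lt hPQ
  obtain ⟨Q', hQ'chord, hQ'⟩ := exists_mem_segment_dist_lt (a₁ := r₀ xm) (a₂ := s₀ xm)
    (b₁ := r₀ xp) (b₂ := s₀ xp) (r := P 0) hδ (by linarith [(abs_lt.mp hP0).1, hQ.1])
    (by linarith [(abs_lt.mp hP0).2, hQ.2])
  have hendpoint : infDist !₂[P 0, γ (P 0)] U₀ < δ := by
    rw [hγ]
    have hQ'U₀ := hU₀conv.segment_subset (hcurve xm) (hcurve xp) hQ'chord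
    exact (infDist_le_dist_of_mem hQ'U₀).trans_lt hQ'
  exact (hU₀conv.setOf_infDist_lt δ).segment_subset hP hendpoint

/-- For every point `(r,s)` in the δ-neighborhood `U_δ` of the convex hull `U₀` of the
initial data curve, the segment from `(r,s)` to `(r, γ(r))` is contained in `U_δ`,
where `γ` is the affine function through `(r₋ - δ, s₋)` and `(r₊ + δ, s₊)`. -/
theorem stmt_4 (r₀ s₀ : AddCircle (1:ℝ) → ℝ) (hr : Continuous r₀) (hs : Continuous s₀)
    (δ : ℝ) (hδ : 0 < δ)
    (xm xp : AddCircle (1:ℝ))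
    (hmin : ∀ x, r₀ xm ≤ r₀ x) (hmax : ∀ x, r₀ x ≤ r₀ xp)
    (U₀ : Set (EuclideanSpace ℝ (Fin 2)))
    (hU₀ : U₀ = convexHull ℝ
      (Set.range fun x => (!₂[r₀ x, s₀ x] : EuclideanSpace ℝ (Fin 2))))
    (γ : ℝ → ℝ)
    (hγ : ∀ ρ, γ ρ = s₀ xm + (s₀ xp - s₀ xm) * (ρ - r₀ xm + δ) / (r₀ xp - r₀ xm + 2*δ))
    (P : EuclideanSpace ℝ (Fin 2)) (hP : Metric.infDist P U₀ < δ) :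
    segment ℝ P (!₂[P 0, γ (P 0)] : EuclideanSpace ℝ (Fin 2))
      ⊆ {Q : EuclideanSpace ℝ (Fin 2) | Metric.infDist Q U₀ < δ} :=
  stmt_4_general r₀ s₀ δ hδ xm xp hmin hmax U₀ hU₀ γ hγ P hP
end

section
/- Let κ, λ : U → ℝ be C¹ with κ - λ ≠ 0 on an open U ⊆ ℝ², and define h(r,s) = ∫_{γ(r)}^{s} (κ-λ)⁻¹ (∂κ/∂s) ds for a fixed C¹ curve γ. Suppose on U: |(κ-λ)⁻¹| ≤ C₁, |κ_s| ≤ C₂, |κ_r| ≤ C₃, |λ_r| ≤ C₄, |λ_s| ≤ C₅, |γ'| ≤ G, and |s - γ(r)| ≤ L on U. Then |h| ≤ C₁ C₂ L on U, and (using integration by parts to avoid κ_{rs}) |∂h/∂r| ≤ C₁(2C₃ G' + C₂ G) + C₁²(C₃ C₅ + C₂ C₄) L for appropriate constants; in particular h and h_r are bounded in terms of the stated bounds. -/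
/-!
`integratingFactor κ lam γ r s` is the paper's `h(r, s) = ∫_{γ(r)}^s (κ - λ)⁻¹ κ_s`.

The bound on `h` is the trivial estimate of the integral. For `h_r` we do not differentiate under
the integral sign, which would bring in `κ_{rs}`: instead `h(·, s)` is shown to be Lipschitz at
`r`, which bounds `|∂h/∂r|` (also where `h` is not differentiable, `deriv` then being `0`).
With `f = (κ - λ)⁻¹ κ_s`,
`h(x, s) - h(r, s) = ∫_{γ x}^{γ r} f(x, ·) + ∫_{γ r}^s (f(x, ·) - f(r, ·))`.
The first integral is `O(G |x - r|)`. In the second, `f(x, ·) - f(r, ·)` splits into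
`((κ - λ)⁻¹(x, ·) - (κ - λ)⁻¹(r, ·)) κ_s(x, ·)`, controlled by the mean value theorem in `r`, and
`(κ - λ)⁻¹(r, ·) ∂_s (κ(x, ·) - κ(r, ·))`, which after an integration by parts in `s` only
involves `κ(x, ·) - κ(r, ·) = O(C₃ |x - r|)`.
-/

open Set intervalIntegral Filter Topology MeasureTheory

lemma abs_sub_le_of_hasDerivAt_uIcc {f f' : ℝ → ℝ} {a b M : ℝ}
    (hf : ∀ t ∈ uIcc a b, HasDerivAt f (f' t) t) (hM : ∀ t ∈ uIcc a b, |f' t| ≤ M) :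
    |f b - f a| ≤ M * |b - a| :=
  (convex_uIcc a b).norm_image_sub_le_of_norm_hasDerivWithin_le
    (fun t ht => (hf t ht).hasDerivWithinAt) hM left_mem_uIcc right_mem_uIcc

lemma abs_mul_le_of_le {a b A B : ℝ} (ha : |a| ≤ A) (hb : |b| ≤ B) : |a * b| ≤ A * B := by
  rw [abs_mul]
  exact mul_le_mul ha hb (abs_nonneg b) ((abs_nonneg a).trans ha)

lemma abs_intervalIntegral_le_of_abs_le {f : ℝ → ℝ} {a b C : ℝ}
    (h : ∀ y ∈ uIcc a b, |f y| ≤ C) : |∫ y in a..b, f y| ≤ C * |b - a| :=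
  norm_integral_le_of_norm_le_const (f := f) fun y hy => h y (uIoc_subset_uIcc hy)

lemma abs_neg_div_sq_le {d d' M C : ℝ} (hd' : |d'| ≤ M) (hd : |d⁻¹| ≤ C) :
    |-d' / d ^ 2| ≤ M * C ^ 2 := by
  rw [neg_div, abs_neg, div_eq_mul_inv, ← inv_pow]
  exact abs_mul_le_of_le hd' (by rw [abs_pow]; exact pow_le_pow_left₀ (abs_nonneg _) hd 2)

lemma abs_inv_sub_inv_le_of_hasDerivAt {φ φ' : ℝ → ℝ} {a b M C : ℝ}
    (hφ : ∀ t ∈ uIcc a b, HasDerivAt φ (φ' t) t) (hne : ∀ t ∈ uIcc a b, φ t ≠ 0)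
    (hM : ∀ t ∈ uIcc a b, |φ' t| ≤ M) (hC : ∀ t ∈ uIcc a b, |(φ t)⁻¹| ≤ C) :
    |(φ b)⁻¹ - (φ a)⁻¹| ≤ M * C ^ 2 * |b - a| :=
  abs_sub_le_of_hasDerivAt_uIcc (fun t ht => (hφ t ht).inv (hne t ht))
    fun t ht => abs_neg_div_sq_le (hM t ht) (hC t ht)

lemma abs_integral_mul_deriv_le {u u' v v' : ℝ → ℝ} {a b A A' V : ℝ}
    (hu : ∀ y ∈ uIcc a b, HasDerivAt u (u' y) y) (hv : ∀ y ∈ uIcc a b, HasDerivAt v (v' y) y)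
    (hu' : IntervalIntegrable u' volume a b) (hv' : IntervalIntegrable v' volume a b)
    (hA : ∀ y ∈ uIcc a b, |u y| ≤ A) (hA' : ∀ y ∈ uIcc a b, |u' y| ≤ A')
    (hV : ∀ y ∈ uIcc a b, |v y| ≤ V) :
    |∫ y in a..b, u y * v' y| ≤ 2 * A * V + A' * V * |b - a| := by
  rw [integral_mul_deriv_eq_deriv_mul hu hv hu' hv']
  have hb : |u b * v b| ≤ A * V := abs_mul_le_of_le (hA b right_mem_uIcc) (hV b right_mem_uIcc)
  have ha : |u a * v a| ≤ A * V := abs_mul_le_of_le (hA a left_mem_uIcc) (hV a left_mem_uIcc)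
  have hint : |∫ y in a..b, u' y * v y| ≤ A' * V * |b - a| :=
    abs_intervalIntegral_le_of_abs_le fun y hy => abs_mul_le_of_le (hA' y hy) (hV y hy)
  calc |u b * v b - u a * v a - ∫ y in a..b, u' y * v y|
      ≤ |u b * v b| + |u a * v a| + |∫ y in a..b, u' y * v y| :=
        (abs_sub _ _).trans (add_le_add_left (abs_sub _ _) _)
    _ ≤ 2 * A * V + A' * V * |b - a| := by linarith

section Slices

variable {f : ℝ × ℝ → ℝ} {x y : ℝ}

lemma DifferentiableAt.hasDerivAt_slice_fst (h : DifferentiableAt ℝ f (x, y)) :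
    HasDerivAt (fun x' => f (x', y)) (deriv (fun x' => f (x', y)) x) x :=
  (h.comp x (differentiableAt_id.prodMk (differentiableAt_const y))).hasDerivAt

lemma DifferentiableAt.hasDerivAt_slice_snd (h : DifferentiableAt ℝ f (x, y)) :
    HasDerivAt (fun y' => f (x, y')) (deriv (fun y' => f (x, y')) y) y :=
  (h.comp y ((differentiableAt_const x).prodMk differentiableAt_id)).hasDerivAt

lemma DifferentiableAt.deriv_slice_snd (h : DifferentiableAt ℝ f (x, y)) :
    deriv (fun y' => f (x, y')) y = fderiv ℝ f (x, y) (0, 1) :=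
  (h.hasFDerivAt.comp_hasDerivAt y ((hasDerivAt_const y x).prodMk (hasDerivAt_id y))).deriv

lemma ContDiffOn.continuousOn_deriv_slice_snd {U : Set (ℝ × ℝ)} {s : Set ℝ} (hU : IsOpen U)
    (hf : ContDiffOn ℝ 1 f U) (hs : ∀ y ∈ s, (x, y) ∈ U) :
    ContinuousOn (fun y => deriv (fun y' => f (x, y')) y) s := by
  have hcont : ContinuousOn (fun y => fderiv ℝ f (x, y) (0, 1)) s :=
    ((hf.continuousOn_fderiv_of_isOpen hU le_rfl).comp
      (Continuous.prodMk_right x).continuousOn hs).clm_apply continuousOn_const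
  exact hcont.congr fun y hy =>
    ((hf.differentiableOn one_ne_zero).differentiableAt (hU.mem_nhds (hs y hy))).deriv_slice_snd

end Slices

lemma eventually_rectangle_subset {U : Set (ℝ × ℝ)} (hU : IsOpen U) {γ : ℝ → ℝ}
    (hγ : Continuous γ) {r s : ℝ} (hseg : ∀ y ∈ uIcc (γ r) s, (r, y) ∈ U) :
    ∀ᶠ x in 𝓝 r, (∀ y ∈ uIcc (γ x) (γ r), (x, y) ∈ U) ∧
      ∀ t ∈ uIcc r x, ∀ y ∈ uIcc (γ r) s, (t, y) ∈ U := by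
  have hK : {r} ×ˢ uIcc (γ r) s ⊆ U := by
    rintro ⟨t, y⟩ ⟨rfl, hy⟩
    exact hseg y hy
  obtain ⟨ε, hε, hthick⟩ :=
    (isCompact_singleton.prod isCompact_uIcc).exists_cthickening_subset_open hU hK
  have hnear : ∀ t y y', |t - r| ≤ ε → y' ∈ uIcc (γ r) s → |y - y'| ≤ ε → (t, y) ∈ U :=
    fun t y y' ht hy' hy => hthick <| Metric.mem_cthickening_of_dist_le (t, y) (r, y') ε _
      ⟨rfl, hy'⟩ (max_le ht hy)
  filter_upwards [Metric.closedBall_mem_nhds r hε,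
    hγ.continuousAt.eventually (Metric.closedBall_mem_nhds (γ r) hε)] with x hx hγx
  rw [Metric.mem_closedBall, Real.dist_eq] at hx
  rw [Real.dist_eq] at hγx
  refine ⟨fun y hy => hnear x y (γ r) hx left_mem_uIcc ?_, fun t ht y hy => hnear t y y ?_ hy ?_⟩
  · rw [uIcc_comm] at hy
    exact (abs_sub_left_of_mem_uIcc hy).trans hγx
  · exact (abs_sub_left_of_mem_uIcc ht).trans hx
  · simpa using hε.le

noncomputable def integratingFactorDensity (κ lam : ℝ × ℝ → ℝ) (x y : ℝ) : ℝ :=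
  (κ (x, y) - lam (x, y))⁻¹ * deriv (fun y' => κ (x, y')) y

noncomputable def integratingFactor (κ lam : ℝ × ℝ → ℝ) (γ : ℝ → ℝ) (x s : ℝ) : ℝ :=
  ∫ y in γ x..s, integratingFactorDensity κ lam x y

section IntegratingFactor

variable {U : Set (ℝ × ℝ)} {κ lam : ℝ × ℝ → ℝ} {C₁ C₂ C₃ C₄ C₅ x r a b : ℝ}

lemma continuousOn_sub_slice (hκ : ContinuousOn κ U) (hlam : ContinuousOn lam U) {s : Set ℝ}
    (hs : ∀ y ∈ s, (x, y) ∈ U) : ContinuousOn (fun y => κ (x, y) - lam (x, y)) s :=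
  (hκ.comp (Continuous.prodMk_right x).continuousOn hs).sub
    (hlam.comp (Continuous.prodMk_right x).continuousOn hs)

lemma continuousOn_inv_sub_slice (hκ : ContinuousOn κ U) (hlam : ContinuousOn lam U)
    (hne : ∀ z ∈ U, κ z - lam z ≠ 0) {s : Set ℝ} (hs : ∀ y ∈ s, (x, y) ∈ U) :
    ContinuousOn (fun y => (κ (x, y) - lam (x, y))⁻¹) s :=
  (continuousOn_sub_slice hκ hlam hs).inv₀ fun y hy => hne _ (hs y hy)

lemma intervalIntegrable_integratingFactorDensity (hU : IsOpen U) (hκ : ContDiffOn ℝ 1 κ U)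
    (hlam : ContDiffOn ℝ 1 lam U) (hne : ∀ z ∈ U, κ z - lam z ≠ 0)
    (hs : ∀ y ∈ uIcc a b, (x, y) ∈ U) :
    IntervalIntegrable (integratingFactorDensity κ lam x) volume a b :=
  ((continuousOn_inv_sub_slice hκ.continuousOn hlam.continuousOn hne hs).mul
    (hκ.continuousOn_deriv_slice_snd hU hs)).intervalIntegrable

lemma abs_integral_integratingFactorDensity_le
    (hC₁ : ∀ z ∈ U, |(κ z - lam z)⁻¹| ≤ C₁)
    (hC₂ : ∀ z ∈ U, |deriv (fun y => κ (z.1, y)) z.2| ≤ C₂)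
    (hs : ∀ y ∈ uIcc a b, (x, y) ∈ U) :
    |∫ y in a..b, integratingFactorDensity κ lam x y| ≤ C₁ * C₂ * |b - a| :=
  abs_intervalIntegral_le_of_abs_le fun y hy =>
    abs_mul_le_of_le (hC₁ _ (hs y hy)) (hC₂ _ (hs y hy))

lemma abs_integral_inv_sub_inv_mul_le (hU : IsOpen U) (hκ : DifferentiableOn ℝ κ U)
    (hlam : DifferentiableOn ℝ lam U) (hne : ∀ z ∈ U, κ z - lam z ≠ 0)
    (hC₁ : ∀ z ∈ U, |(κ z - lam z)⁻¹| ≤ C₁)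
    (hC₂ : ∀ z ∈ U, |deriv (fun y => κ (z.1, y)) z.2| ≤ C₂)
    (hC₃ : ∀ z ∈ U, |deriv (fun x => κ (x, z.2)) z.1| ≤ C₃)
    (hC₄ : ∀ z ∈ U, |deriv (fun x => lam (x, z.2)) z.1| ≤ C₄)
    (hR : ∀ t ∈ uIcc r x, ∀ y ∈ uIcc a b, (t, y) ∈ U) :
    |∫ y in a..b, ((κ (x, y) - lam (x, y))⁻¹ - (κ (r, y) - lam (r, y))⁻¹) *
        deriv (fun y' => κ (x, y')) y|
      ≤ (C₃ + C₄) * C₁ ^ 2 * |x - r| * C₂ * |b - a| := by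
  refine abs_intervalIntegral_le_of_abs_le fun y hy => abs_mul_le_of_le ?_
    (hC₂ _ (hR x right_mem_uIcc y hy))
  have hU' : ∀ t ∈ uIcc r x, (t, y) ∈ U := fun t ht => hR t ht y hy
  refine abs_inv_sub_inv_le_of_hasDerivAt (φ := fun t => κ (t, y) - lam (t, y))
    (φ' := fun t => deriv (fun t' => κ (t', y)) t - deriv (fun t' => lam (t', y)) t)
    (fun t ht => ?_) (fun t ht => hne _ (hU' t ht)) (fun t ht => ?_)
    (fun t ht => hC₁ _ (hU' t ht))
  · exact ((hκ.differentiableAt (hU.mem_nhds (hU' t ht))).hasDerivAt_slice_fst).sub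
      (hlam.differentiableAt (hU.mem_nhds (hU' t ht))).hasDerivAt_slice_fst
  · exact (abs_sub _ _).trans (add_le_add (hC₃ _ (hU' t ht)) (hC₄ _ (hU' t ht)))

lemma abs_integral_inv_mul_sub_le (hU : IsOpen U) (hκ : ContDiffOn ℝ 1 κ U)
    (hlam : ContDiffOn ℝ 1 lam U) (hne : ∀ z ∈ U, κ z - lam z ≠ 0)
    (hC₁ : ∀ z ∈ U, |(κ z - lam z)⁻¹| ≤ C₁)
    (hC₂ : ∀ z ∈ U, |deriv (fun y => κ (z.1, y)) z.2| ≤ C₂)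
    (hC₃ : ∀ z ∈ U, |deriv (fun x => κ (x, z.2)) z.1| ≤ C₃)
    (hC₅ : ∀ z ∈ U, |deriv (fun y => lam (z.1, y)) z.2| ≤ C₅)
    (hR : ∀ t ∈ uIcc r x, ∀ y ∈ uIcc a b, (t, y) ∈ U) :
    |∫ y in a..b, (κ (r, y) - lam (r, y))⁻¹ *
        (deriv (fun y' => κ (x, y')) y - deriv (fun y' => κ (r, y')) y)|
      ≤ 2 * C₁ * (C₃ * |x - r|) + (C₂ + C₅) * C₁ ^ 2 * (C₃ * |x - r|) * |b - a| := by
  have hr : ∀ y ∈ uIcc a b, (r, y) ∈ U := hR r left_mem_uIcc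
  have hx : ∀ y ∈ uIcc a b, (x, y) ∈ U := hR x right_mem_uIcc
  have hκd : ∀ z ∈ U, DifferentiableAt ℝ κ z := fun z hz =>
    (hκ.differentiableOn one_ne_zero).differentiableAt (hU.mem_nhds hz)
  have hlamd : ∀ z ∈ U, DifferentiableAt ℝ lam z := fun z hz =>
    (hlam.differentiableOn one_ne_zero).differentiableAt (hU.mem_nhds hz)
  refine abs_integral_mul_deriv_le (u := fun y => (κ (r, y) - lam (r, y))⁻¹)
    (u' := fun y => -(deriv (fun y' => κ (r, y')) y - deriv (fun y' => lam (r, y')) y) /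
      (κ (r, y) - lam (r, y)) ^ 2)
    (v := fun y => κ (x, y) - κ (r, y))
    (fun y hy => ?_) (fun y hy => ?_) ?_ ?_ (fun y hy => hC₁ _ (hr y hy)) (fun y hy => ?_)
    (fun y hy => ?_)
  · exact ((hκd _ (hr y hy)).hasDerivAt_slice_snd.sub
      (hlamd _ (hr y hy)).hasDerivAt_slice_snd).inv (hne _ (hr y hy))
  · exact (hκd _ (hx y hy)).hasDerivAt_slice_snd.sub (hκd _ (hr y hy)).hasDerivAt_slice_snd
  · exact (((hκ.continuousOn_deriv_slice_snd hU hr).sub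
      (hlam.continuousOn_deriv_slice_snd hU hr)).neg.div
      ((continuousOn_sub_slice hκ.continuousOn hlam.continuousOn hr).pow 2)
      fun y hy => pow_ne_zero 2 (hne _ (hr y hy))).intervalIntegrable
  · exact ((hκ.continuousOn_deriv_slice_snd hU hx).sub
      (hκ.continuousOn_deriv_slice_snd hU hr)).intervalIntegrable
  · exact abs_neg_div_sq_le ((abs_sub _ _).trans (add_le_add (hC₂ _ (hr y hy)) (hC₅ _ (hr y hy))))
      (hC₁ _ (hr y hy))
  · exact abs_sub_le_of_hasDerivAt_uIcc (f := fun t => κ (t, y))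
      (fun t ht => (hκd _ (hR t ht y hy)).hasDerivAt_slice_fst) fun t ht => hC₃ _ (hR t ht y hy)

lemma abs_integral_integratingFactorDensity_sub_le (hU : IsOpen U) (hκ : ContDiffOn ℝ 1 κ U)
    (hlam : ContDiffOn ℝ 1 lam U) (hne : ∀ z ∈ U, κ z - lam z ≠ 0)
    (hC₁ : ∀ z ∈ U, |(κ z - lam z)⁻¹| ≤ C₁)
    (hC₂ : ∀ z ∈ U, |deriv (fun y => κ (z.1, y)) z.2| ≤ C₂)
    (hC₃ : ∀ z ∈ U, |deriv (fun x => κ (x, z.2)) z.1| ≤ C₃)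
    (hC₄ : ∀ z ∈ U, |deriv (fun x => lam (x, z.2)) z.1| ≤ C₄)
    (hC₅ : ∀ z ∈ U, |deriv (fun y => lam (z.1, y)) z.2| ≤ C₅)
    (hR : ∀ t ∈ uIcc r x, ∀ y ∈ uIcc a b, (t, y) ∈ U) :
    |∫ y in a..b, (integratingFactorDensity κ lam x y - integratingFactorDensity κ lam r y)|
      ≤ ((C₃ + C₄) * C₁ ^ 2 * C₂ * |b - a| + 2 * C₁ * C₃ +
          (C₂ + C₅) * C₁ ^ 2 * C₃ * |b - a|) * |x - r| := by
  have hr : ∀ y ∈ uIcc a b, (r, y) ∈ U := hR r left_mem_uIcc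
  have hx : ∀ y ∈ uIcc a b, (x, y) ∈ U := hR x right_mem_uIcc
  have hinv := fun {t} (ht : ∀ y ∈ uIcc a b, (t, y) ∈ U) =>
    continuousOn_inv_sub_slice hκ.continuousOn hlam.continuousOn hne ht
  have hsplit :
      ∫ y in a..b, (integratingFactorDensity κ lam x y - integratingFactorDensity κ lam r y)
      = (∫ y in a..b, ((κ (x, y) - lam (x, y))⁻¹ - (κ (r, y) - lam (r, y))⁻¹) *
          deriv (fun y' => κ (x, y')) y) +
        ∫ y in a..b, (κ (r, y) - lam (r, y))⁻¹ *
          (deriv (fun y' => κ (x, y')) y - deriv (fun y' => κ (r, y')) y) := by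
    refine (integral_congr fun y _ => ?_).trans (integral_add
      (((hinv hx).sub (hinv hr)).mul (hκ.continuousOn_deriv_slice_snd hU hx)).intervalIntegrable
      ((hinv hr).mul ((hκ.continuousOn_deriv_slice_snd hU hx).sub
        (hκ.continuousOn_deriv_slice_snd hU hr))).intervalIntegrable)
    simp only [integratingFactorDensity]
    ring
  rw [hsplit]
  calc _ ≤ _ := abs_add_le _ _
    _ ≤ _ := add_le_add
        (abs_integral_inv_sub_inv_mul_le hU (hκ.differentiableOn one_ne_zero)
          (hlam.differentiableOn one_ne_zero) hne hC₁ hC₂ hC₃ hC₄ hR)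
        (abs_integral_inv_mul_sub_le hU hκ hlam hne hC₁ hC₂ hC₃ hC₅ hR)
    _ = _ := by ring

lemma abs_integratingFactor_sub_le {γ : ℝ → ℝ} {s : ℝ} (hU : IsOpen U)
    (hκ : ContDiffOn ℝ 1 κ U) (hlam : ContDiffOn ℝ 1 lam U) (hne : ∀ z ∈ U, κ z - lam z ≠ 0)
    (hC₁ : ∀ z ∈ U, |(κ z - lam z)⁻¹| ≤ C₁)
    (hC₂ : ∀ z ∈ U, |deriv (fun y => κ (z.1, y)) z.2| ≤ C₂)
    (hC₃ : ∀ z ∈ U, |deriv (fun x => κ (x, z.2)) z.1| ≤ C₃)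
    (hC₄ : ∀ z ∈ U, |deriv (fun x => lam (x, z.2)) z.1| ≤ C₄)
    (hC₅ : ∀ z ∈ U, |deriv (fun y => lam (z.1, y)) z.2| ≤ C₅)
    (hvert : ∀ y ∈ uIcc (γ x) (γ r), (x, y) ∈ U)
    (hR : ∀ t ∈ uIcc r x, ∀ y ∈ uIcc (γ r) s, (t, y) ∈ U) :
    |integratingFactor κ lam γ x s - integratingFactor κ lam γ r s|
      ≤ C₁ * C₂ * |γ r - γ x| + ((C₃ + C₄) * C₁ ^ 2 * C₂ * |s - γ r| + 2 * C₁ * C₃ +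
          (C₂ + C₅) * C₁ ^ 2 * C₃ * |s - γ r|) * |x - r| := by
  have hsplit : integratingFactor κ lam γ x s - integratingFactor κ lam γ r s
      = (∫ y in γ x..γ r, integratingFactorDensity κ lam x y) +
        ∫ y in γ r..s,
          (integratingFactorDensity κ lam x y - integratingFactorDensity κ lam r y) := by
    have hx := intervalIntegrable_integratingFactorDensity hU hκ hlam hne (hR x right_mem_uIcc)
    rw [integratingFactor, integratingFactor,
      ← integral_add_adjacent_intervals
        (intervalIntegrable_integratingFactorDensity hU hκ hlam hne hvert) hx,
      integral_sub hx
        (intervalIntegrable_integratingFactorDensity hU hκ hlam hne (hR r left_mem_uIcc))]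
    ring
  rw [hsplit]
  exact (abs_add_le _ _).trans
    (add_le_add (abs_integral_integratingFactorDensity_le hC₁ hC₂ hvert)
      (abs_integral_integratingFactorDensity_sub_le hU hκ hlam hne hC₁ hC₂ hC₃ hC₄ hC₅ hR))

end IntegratingFactor

theorem stmt_17_general (C₁ C₂ C₃ C₄ C₅ G L : ℝ) :
    ∃ C : ℝ, ∀ (U : Set (ℝ × ℝ)) (κ lam : ℝ × ℝ → ℝ) (γ : ℝ → ℝ),
      IsOpen U → ContDiffOn ℝ 2 κ U → ContDiffOn ℝ 2 lam U →
      Differentiable ℝ γ → (∀ ρ : ℝ, |deriv γ ρ| ≤ G) →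
      (∀ z ∈ U, κ z - lam z ≠ 0) →
      (∀ z ∈ U, |(κ z - lam z)⁻¹| ≤ C₁) →
      (∀ z ∈ U, |deriv (fun y => κ (z.1, y)) z.2| ≤ C₂) →
      (∀ z ∈ U, |deriv (fun x => κ (x, z.2)) z.1| ≤ C₃) →
      (∀ z ∈ U, |deriv (fun x => lam (x, z.2)) z.1| ≤ C₄) →
      (∀ z ∈ U, |deriv (fun y => lam (z.1, y)) z.2| ≤ C₅) →
      (∀ z ∈ U, ∀ y ∈ Set.uIcc (γ z.1) z.2, (z.1, y) ∈ U) →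
      (∀ z ∈ U, |z.2 - γ z.1| ≤ L) →
      ∀ z ∈ U,
        |∫ y in γ z.1..z.2,
            (κ (z.1, y) - lam (z.1, y))⁻¹ * deriv (fun y' => κ (z.1, y')) y|
          ≤ C₁ * C₂ * L ∧
        |deriv (fun x => ∫ y in γ x..z.2,
            (κ (x, y) - lam (x, y))⁻¹ * deriv (fun y' => κ (x, y')) y) z.1| ≤ C := by
  refine ⟨C₁ * C₂ * G + ((C₃ + C₄) * C₁ ^ 2 * C₂ * L + 2 * C₁ * C₃ +
    (C₂ + C₅) * C₁ ^ 2 * C₃ * L), ?_⟩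
  intro U κ lam γ hU hκ hlam hγ hγ' hne hC₁ hC₂ hC₃ hC₄ hC₅ hseg hL z hz
  have hκ₁ : ContDiffOn ℝ 1 κ U := hκ.of_le one_le_two
  have hlam₁ : ContDiffOn ℝ 1 lam U := hlam.of_le one_le_two
  have h₁ : 0 ≤ C₁ := (abs_nonneg _).trans (hC₁ z hz)
  have h₂ : 0 ≤ C₂ := (abs_nonneg _).trans (hC₂ z hz)
  have h₃ : 0 ≤ C₃ := (abs_nonneg _).trans (hC₃ z hz)
  have h₄ : 0 ≤ C₄ := (abs_nonneg _).trans (hC₄ z hz)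
  have h₅ : 0 ≤ C₅ := (abs_nonneg _).trans (hC₅ z hz)
  have hG : 0 ≤ G := (abs_nonneg _).trans (hγ' 0)
  have hLz : |z.2 - γ z.1| ≤ L := hL z hz
  have hL₀ : 0 ≤ L := (abs_nonneg _).trans hLz
  refine ⟨(abs_integral_integratingFactorDensity_le hC₁ hC₂ (hseg z hz)).trans (by gcongr), ?_⟩
  refine norm_deriv_le_of_lip' (f := fun x => integratingFactor κ lam γ x z.2) (by positivity) ?_
  filter_upwards [eventually_rectangle_subset hU hγ.continuous (hseg z hz)]
    with x ⟨hvert, hR⟩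
  rw [Real.norm_eq_abs, Real.norm_eq_abs]
  have hγx : |γ z.1 - γ x| ≤ G * |x - z.1| := by
    rw [abs_sub_comm x]
    exact abs_sub_le_of_hasDerivAt_uIcc (fun t _ => (hγ t).hasDerivAt) fun t _ => hγ' t
  calc _ ≤ _ := abs_integratingFactor_sub_le hU hκ₁ hlam₁ hne hC₁ hC₂ hC₃ hC₄ hC₅ hvert hR
    _ ≤ C₁ * C₂ * (G * |x - z.1|) + ((C₃ + C₄) * C₁ ^ 2 * C₂ * L + 2 * C₁ * C₃ +
          (C₂ + C₅) * C₁ ^ 2 * C₃ * L) * |x - z.1| := by gcongr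
    _ = _ := by ring

/-- The integrating factor `h(r,s) = ∫_{γ(r)}^s (κ-λ)⁻¹ κ_s ds` satisfies
`|h| ≤ C₁ C₂ L`, and (integrating by parts to avoid `κ_{rs}`) its `r`-derivative is
bounded by a constant depending only on the stated bounds `C₁,…,C₅, G, L`. -/
theorem stmt_17 (C₁ C₂ C₃ C₄ C₅ G L : ℝ)
    (h1 : 0 ≤ C₁) (h2 : 0 ≤ C₂) (h3 : 0 ≤ C₃) (h4 : 0 ≤ C₄) (h5 : 0 ≤ C₅)
    (hG : 0 ≤ G) (hL : 0 ≤ L) :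
    ∃ C : ℝ, ∀ (U : Set (ℝ × ℝ)) (κ lam : ℝ × ℝ → ℝ) (γ : ℝ → ℝ),
      IsOpen U → ContDiffOn ℝ 2 κ U → ContDiffOn ℝ 2 lam U →
      Differentiable ℝ γ → (∀ ρ : ℝ, |deriv γ ρ| ≤ G) →
      (∀ z ∈ U, κ z - lam z ≠ 0) →
      (∀ z ∈ U, |(κ z - lam z)⁻¹| ≤ C₁) →
      (∀ z ∈ U, |deriv (fun y => κ (z.1, y)) z.2| ≤ C₂) →
      (∀ z ∈ U, |deriv (fun x => κ (x, z.2)) z.1| ≤ C₃) →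
      (∀ z ∈ U, |deriv (fun x => lam (x, z.2)) z.1| ≤ C₄) →
      (∀ z ∈ U, |deriv (fun y => lam (z.1, y)) z.2| ≤ C₅) →
      (∀ z ∈ U, ∀ y ∈ Set.uIcc (γ z.1) z.2, (z.1, y) ∈ U) →
      (∀ z ∈ U, |z.2 - γ z.1| ≤ L) →
      ∀ z ∈ U,
        |∫ y in γ z.1..z.2,
            (κ (z.1, y) - lam (z.1, y))⁻¹ * deriv (fun y' => κ (z.1, y')) y|
          ≤ C₁ * C₂ * L ∧
        |deriv (fun x => ∫ y in γ x..z.2,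
            (κ (x, y) - lam (x, y))⁻¹ * deriv (fun y' => κ (x, y')) y) z.1| ≤ C :=
  stmt_17_general C₁ C₂ C₃ C₄ C₅ G L
end

section
/- Suppose v : [t₀,t₁) → ℝ solves v' = A₂ v² + A₁ v + A₀ with constants |A₁| ≤ C₁, |A₀| ≤ C₀, A₂ ≥ C₂ > 0, all coefficients continuous. If v(t₀) > C₀ χ + (C₂ χ)⁻¹ + C₁/C₂ where χ = (e^{C₁(t₁-t₀)} - 1)/C₁ (or χ = t₁ - t₀ when C₁ = 0), then v cannot remain bounded (finite) on all of [t₀, t₁]; i.e., the maximal existence time of a bounded solution is strictly less than t₁. -/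
/-!
Write `φ_c(τ) = ∫₀^τ e^{cu} du` and `E(t) = e^{C₁(t-t₀)}`. On `[t₀, s]` the function
`h = E v + C₀ φ_{C₁}(t - t₀) - C₀ φ_{C₁}(s - t₀)` starts at `v(t₀) - C₀ φ_{C₁}(s - t₀) > 0` and,
wherever it is positive, satisfies the Riccati inequality `h' ≥ C₂ E⁻¹ h²`: there `v > 0`, so the
linear term and `A₀` can only help. Hence `h` stays positive and `-h⁻¹ - C₂ φ_{-C₁}(t - t₀)` is
nondecreasing, which bounds `C₂ φ_{-C₁}(s - t₀)` by `h(t₀)⁻¹ ≤ (v(t₀) - C₀ χ)⁻¹` for every `s < t₁`.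
Letting `s → t₁` and using `φ_{-c}(T)⁻¹ = φ_c(T)⁻¹ + c` contradicts the lower bound on `v(t₀)`:
no solution exists on the whole of `[t₀, t₁)`, bounded or not.
-/

open Real Set Filter

noncomputable def expIntegral (c τ : ℝ) : ℝ := ∫ u in (0)..τ, exp (c * u)

namespace expIntegral

variable (c : ℝ)

theorem hasDerivAt (τ : ℝ) : HasDerivAt (expIntegral c) (exp (c * τ)) τ :=
  ((continuous_const.mul continuous_id).rexp.integral_hasStrictDerivAt 0 τ).hasDerivAt

@[simp]
theorem zero_right : expIntegral c 0 = 0 := intervalIntegral.integral_same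

theorem strictMono : StrictMono (expIntegral c) :=
  strictMono_of_hasDerivAt_pos (hasDerivAt c) fun _ => exp_pos _

theorem continuous : Continuous (expIntegral c) :=
  continuous_iff_continuousAt.2 fun τ => (hasDerivAt c τ).continuousAt

theorem pos {τ : ℝ} (hτ : 0 < τ) : 0 < expIntegral c τ := by
  simpa using strictMono c hτ

theorem mul_eq_exp_sub_one (τ : ℝ) : c * expIntegral c τ = exp (c * τ) - 1 := by
  rw [expIntegral, ← intervalIntegral.integral_const_mul,
    intervalIntegral.integral_eq_sub_of_hasDerivAt (f := fun u => exp (c * u))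
      (fun u _ => by simpa [mul_comm] using ((hasDerivAt_id u).const_mul c).exp)
      ((by fun_prop : Continuous fun u => c * exp (c * u)).intervalIntegrable _ _)]
  simp

theorem eq_ite (τ : ℝ) :
    expIntegral c τ = if c = 0 then τ else (exp (c * τ) - 1) / c := by
  split_ifs with hc
  · simp [expIntegral, hc]
  · rw [← mul_eq_exp_sub_one, mul_div_cancel_left₀ _ hc]

theorem exp_mul_expIntegral_neg (τ : ℝ) : exp (c * τ) * expIntegral (-c) τ = expIntegral c τ := by
  have hsubst := intervalIntegral.integral_comp_sub_left (a := 0) (b := τ) (fun u => exp (c * u)) τ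
  rw [sub_self, sub_zero] at hsubst
  rw [expIntegral, expIntegral, ← hsubst, ← intervalIntegral.integral_const_mul]
  simp_rw [← exp_add]
  ring_nf

theorem inv_neg_eq_inv_add {τ : ℝ} (hτ : 0 < τ) :
    (expIntegral (-c) τ)⁻¹ = (expIntegral c τ)⁻¹ + c := by
  have hφ := pos c hτ
  have hψ := pos (-c) hτ
  have h1 := exp_mul_expIntegral_neg c τ
  have h2 := mul_eq_exp_sub_one c τ
  field_simp
  linear_combination -h1 - expIntegral (-c) τ * h2

end expIntegral

theorem le_image_of_deriv_right_pos_of_pos {h h' : ℝ → ℝ} {a b : ℝ}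
    (hh : ContinuousOn h (Icc a b)) (hh' : ∀ x ∈ Ico a b, HasDerivWithinAt h (h' x) (Ici x) x)
    (ha : 0 < h a) (hpos : ∀ x ∈ Ico a b, 0 < h x → 0 < h' x) :
    ∀ x ∈ Icc a b, h a ≤ h x := fun x hx =>
  neg_le_neg_iff.1 <| image_le_of_deriv_right_lt_deriv_boundary (f := -h) (B := fun _ => -h a)
    hh.neg (fun x hx => (hh' x hx).neg) le_rfl (fun _ => hasDerivAt_const _ _)
    (fun x hx hxa => neg_neg_of_pos <| hpos x hx <| by simpa [neg_inj.1 hxa] using ha) hx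

theorem sub_lt_inv_of_mul_sq_le_deriv {h h' P p : ℝ → ℝ} {a b : ℝ} (hab : a ≤ b)
    (hh : ContinuousOn h (Icc a b)) (hh' : ∀ x ∈ Ico a b, HasDerivWithinAt h (h' x) (Ici x) x)
    (hP : ContinuousOn P (Icc a b)) (hP' : ∀ x ∈ Ico a b, HasDerivWithinAt P (p x) (Ici x) x)
    (hp : ∀ x ∈ Ico a b, 0 < p x) (ha : 0 < h a)
    (hineq : ∀ x ∈ Ico a b, 0 < h x → p x * h x ^ 2 ≤ h' x) :
    P b - P a < (h a)⁻¹ := by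
  have hpos : ∀ x ∈ Icc a b, 0 < h x := fun x hx =>
    ha.trans_le <| le_image_of_deriv_right_pos_of_pos hh hh' ha
      (fun x hx hx₀ => (mul_pos (hp x hx) (pow_pos hx₀ 2)).trans_le (hineq x hx hx₀)) x hx
  have hbound := image_le_of_deriv_right_le_deriv_boundary (B := fun x => P a + (h a)⁻¹ - (h x)⁻¹)
    (B' := fun x => h' x / h x ^ 2) hP hP' (by simp)
    (continuousOn_const.sub (hh.inv₀ fun x hx => (hpos x hx).ne'))
    (fun x hx => by
      simpa [neg_div] using
        ((hh' x hx).inv (hpos x (Ico_subset_Icc_self hx)).ne').const_sub (P a + (h a)⁻¹))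
    (fun x hx => by
      have hx₀ := hpos x (Ico_subset_Icc_self hx)
      rw [le_div_iff₀ (by positivity)]
      exact hineq x hx hx₀)
    (right_mem_Icc.2 hab)
  have := inv_pos.2 (hpos b (right_mem_Icc.2 hab))
  linarith

theorem mul_inv_mul_sq_le_riccati {a₂ a₁ a₀ C₀ C₁ C₂ E v y : ℝ} (hC₂ : 0 ≤ C₂) (hE : 0 < E)
    (ha₂ : C₂ ≤ a₂) (ha₁ : |a₁| ≤ C₁) (ha₀ : |a₀| ≤ C₀) (hy : 0 < y) (hyv : y ≤ E * v) :
    C₂ * E⁻¹ * y ^ 2 ≤ E * (a₂ * v ^ 2 + a₁ * v + a₀ + C₁ * v + C₀) := by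
  have hv : 0 < v := pos_of_mul_pos_right (hy.trans_le hyv) hE.le
  have h₁ : 0 ≤ a₁ * v + C₁ * v := by nlinarith [neg_abs_le a₁]
  have h₀ : 0 ≤ a₀ + C₀ := by linarith [neg_abs_le a₀]
  calc C₂ * E⁻¹ * y ^ 2 ≤ C₂ * E⁻¹ * (E * v) ^ 2 := by gcongr
    _ = E * (C₂ * v ^ 2) := by field_simp
    _ ≤ E * (a₂ * v ^ 2) := by gcongr
    _ ≤ E * (a₂ * v ^ 2 + a₁ * v + a₀ + C₁ * v + C₀) := by gcongr; linarith

theorem riccati_expIntegral_lt {A₂ A₁ A₀ v : ℝ → ℝ} {t₀ s C₀ C₁ C₂ : ℝ} (hs : t₀ ≤ s)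
    (hC₀ : 0 ≤ C₀) (hC₂ : 0 < C₂)
    (hb : ∀ t ∈ Icc t₀ s, |A₁ t| ≤ C₁ ∧ |A₀ t| ≤ C₀ ∧ C₂ ≤ A₂ t)
    (hv : ∀ t ∈ Icc t₀ s, HasDerivAt v (A₂ t * v t ^ 2 + A₁ t * v t + A₀ t) t)
    (hv₀ : C₀ * expIntegral C₁ (s - t₀) < v t₀) :
    C₂ * expIntegral (-C₁) (s - t₀) < (v t₀ - C₀ * expIntegral C₁ (s - t₀))⁻¹ := by
  set K := C₀ * expIntegral C₁ (s - t₀)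
  set E : ℝ → ℝ := fun t => exp (C₁ * (t - t₀))
  have hE : ∀ t, HasDerivAt E (C₁ * E t) t := fun t => by
    simpa [E, mul_comm] using (((hasDerivAt_id t).sub_const t₀).const_mul C₁).exp
  have hφ : ∀ c t, HasDerivAt (fun t => expIntegral c (t - t₀)) (exp (c * (t - t₀))) t :=
    fun c t => (expIntegral.hasDerivAt c _).comp_sub_const t t₀
  set h : ℝ → ℝ := fun t => E t * v t + C₀ * expIntegral C₁ (t - t₀) - K
  have hh : ∀ t ∈ Icc t₀ s, HasDerivAt h
      (E t * (A₂ t * v t ^ 2 + A₁ t * v t + A₀ t + C₁ * v t + C₀)) t := fun t ht => by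
    refine ((((hE t).mul (hv t ht)).add ((hφ C₁ t).const_mul C₀)).sub_const K).congr_deriv ?_
    ring
  have hP : ∀ t, HasDerivAt (fun t => C₂ * expIntegral (-C₁) (t - t₀)) (C₂ * (E t)⁻¹) t :=
    fun t => by simpa [E, ← exp_neg] using (hφ (-C₁) t).const_mul C₂
  have key := sub_lt_inv_of_mul_sq_le_deriv hs (h := h)
    (fun t ht => (hh t ht).continuousAt.continuousWithinAt)
    (fun t ht => (hh t (Ico_subset_Icc_self ht)).hasDerivWithinAt)
    (fun t _ => (hP t).continuousAt.continuousWithinAt) (fun t _ => (hP t).hasDerivWithinAt)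
    (fun t _ => by positivity) (by simpa [h, E] using hv₀)
    (fun t ht hpos => by
      obtain ⟨hA₁, hA₀, hA₂⟩ := hb t (Ico_subset_Icc_self ht)
      refine mul_inv_mul_sq_le_riccati hC₂.le (exp_pos _) hA₂ hA₁ hA₀ hpos ?_
      have : C₀ * expIntegral C₁ (t - t₀) ≤ K :=
        mul_le_mul_of_nonneg_left
          ((expIntegral.strictMono C₁).monotone (by linarith [ht.2] : t - t₀ ≤ s - t₀)) hC₀
      simp only [h]; linarith)
  simpa [h, E] using key

theorem stmt_18_general (t₀ t₁ C₀ C₁ C₂ : ℝ) (ht : t₀ < t₁)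
    (hC₀ : 0 ≤ C₀) (hC₁ : 0 ≤ C₁) (hC₂ : 0 < C₂)
    (A₂ A₁ A₀ : ℝ → ℝ)
    (hb : ∀ t ∈ Set.Ico t₀ t₁, |A₁ t| ≤ C₁ ∧ |A₀ t| ≤ C₀ ∧ C₂ ≤ A₂ t)
    (χ : ℝ) (hχ : χ = if C₁ = 0 then t₁ - t₀ else (Real.exp (C₁ * (t₁ - t₀)) - 1) / C₁)
    (v : ℝ → ℝ)
    (hv : ∀ t ∈ Set.Ico t₀ t₁, HasDerivAt v (A₂ t * v t ^ 2 + A₁ t * v t + A₀ t) t)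
    (hv₀ : v t₀ > C₀ * χ + (C₂ * χ)⁻¹ + C₁ / C₂) :
    ¬ ∃ M : ℝ, ∀ t ∈ Set.Ico t₀ t₁, |v t| ≤ M := by
  rintro -
  have hT : 0 < t₁ - t₀ := sub_pos.2 ht
  rw [← expIntegral.eq_ite] at hχ
  have hχ₀ : 0 < χ := hχ ▸ expIntegral.pos C₁ hT
  have hh₀ : 0 < v t₀ - C₀ * χ := by
    have : 0 < (C₂ * χ)⁻¹ := by positivity
    have : 0 ≤ C₁ / C₂ := by positivity
    linarith
  have hlt : ∀ s ∈ Ico t₀ t₁, C₂ * expIntegral (-C₁) (s - t₀) < (v t₀ - C₀ * χ)⁻¹ := by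
    intro s hs
    have hsub : Icc t₀ s ⊆ Ico t₀ t₁ := Icc_subset_Ico_right hs.2
    have hK : C₀ * expIntegral C₁ (s - t₀) ≤ C₀ * χ := hχ ▸
      mul_le_mul_of_nonneg_left ((expIntegral.strictMono C₁).monotone (by linarith [hs.2])) hC₀
    calc C₂ * expIntegral (-C₁) (s - t₀) < (v t₀ - C₀ * expIntegral C₁ (s - t₀))⁻¹ :=
          riccati_expIntegral_lt hs.1 hC₀ hC₂ (fun t ht => hb t (hsub ht))
            (fun t ht => hv t (hsub ht)) (by linarith)
      _ ≤ (v t₀ - C₀ * χ)⁻¹ := inv_anti₀ hh₀ (by linarith)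
  have hle : C₂ * expIntegral (-C₁) (t₁ - t₀) ≤ (v t₀ - C₀ * χ)⁻¹ :=
    le_of_tendsto
      ((((expIntegral.continuous (-C₁)).comp (continuous_sub_right t₀)).const_mul C₂
        |>.tendsto t₁).mono_left nhdsWithin_le_nhds)
      (eventually_of_mem (Ioo_mem_nhdsLT ht) fun s hs => (hlt s (Ioo_subset_Ico_self hs)).le)
  have hinv : (C₂ * expIntegral (-C₁) (t₁ - t₀))⁻¹ = (C₂ * χ)⁻¹ + C₁ / C₂ := by
    rw [mul_inv, expIntegral.inv_neg_eq_inv_add C₁ hT, ← hχ]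
    field_simp
  have := (le_inv_comm₀ (mul_pos hC₂ (expIntegral.pos (-C₁) hT)) hh₀).1 hle
  linarith

/-- Uniform-constant Riccati blowup criterion: if `v' = A₂ v² + A₁ v + A₀` on
`[t₀,t₁)` with `|A₁| ≤ C₁`, `|A₀| ≤ C₀`, `A₂ ≥ C₂ > 0` and
`v(t₀) > C₀ χ + (C₂ χ)⁻¹ + C₁/C₂` where `χ = (e^{C₁(t₁-t₀)} - 1)/C₁` (`χ = t₁ - t₀`
when `C₁ = 0`), then `v` cannot remain bounded on `[t₀,t₁)`. -/
theorem stmt_18 (t₀ t₁ C₀ C₁ C₂ : ℝ) (ht : t₀ < t₁)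
    (hC₀ : 0 ≤ C₀) (hC₁ : 0 ≤ C₁) (hC₂ : 0 < C₂)
    (A₂ A₁ A₀ : ℝ → ℝ)
    (hA₂c : ContinuousOn A₂ (Set.Ico t₀ t₁))
    (hA₁c : ContinuousOn A₁ (Set.Ico t₀ t₁))
    (hA₀c : ContinuousOn A₀ (Set.Ico t₀ t₁))
    (hb : ∀ t ∈ Set.Ico t₀ t₁, |A₁ t| ≤ C₁ ∧ |A₀ t| ≤ C₀ ∧ C₂ ≤ A₂ t)
    (χ : ℝ) (hχ : χ = if C₁ = 0 then t₁ - t₀ else (Real.exp (C₁ * (t₁ - t₀)) - 1) / C₁)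
    (v : ℝ → ℝ)
    (hv : ∀ t ∈ Set.Ico t₀ t₁, HasDerivAt v (A₂ t * v t ^ 2 + A₁ t * v t + A₀ t) t)
    (hv₀ : v t₀ > C₀ * χ + (C₂ * χ)⁻¹ + C₁ / C₂) :
    ¬ ∃ M : ℝ, ∀ t ∈ Set.Ico t₀ t₁, |v t| ≤ M :=
  stmt_18_general t₀ t₁ C₀ C₁ C₂ ht hC₀ hC₁ hC₂ A₂ A₁ A₀ hb χ hχ v hv hv₀
end
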